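/- arXiv:0903.3594 — 3 statements merged into one kernel-verified Lean document; each statement's English description precedes it below -/
import Mathlib

section
/- For any countable collection of functions f₁, f₂, … in F ⊆ L^α_+(S,μ), and any aᵢ, bⱼ ≥ 0, c > 0, the set { (⋁ᵢ aᵢ fᵢ)/(⋁ⱼ bⱼ gⱼ) ≤ c } equals ⋂ᵢ ⋂ₙ ⋃ⱼ { aᵢ fᵢ / (bⱼ gⱼ) < c + 1/n }, where fᵢ, gⱼ ∈ F. Consequently the ratio σ-field of the max-linear span of F is contained in the ratio σ-field of F. -/
/-!
Since `x ↦ a / x` turns suprema into infima on `[0,∞]` (for finite `a`), the ratio of two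
suprema is `⨆ᵢ ⨅ⱼ aᵢ fᵢ / (bⱼ gⱼ)`. The level set `{⨆ᵢ ⨅ⱼ … ≤ c}` is then the stated countable
Boolean combination. For the σ-field inclusion, each `aᵢ fᵢ / (bⱼ gⱼ)` is a constant multiple
of a ratio of elements of `F`, so a ratio of two max-linear combinations is a finite max-min of
`ρ(F)`-measurable functions.
-/

open MeasureTheory Filter
open scoped ENNReal Topology

/-- The ratio σ-field `ρ(F)` generated by the ratios `f₁/f₂`, `f₁, f₂ ∈ F`,
with ratios valued in `[0,∞]` (conventions `0/0 = 0`, `c/0 = ∞` for `c > 0`). -/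
noncomputable def ratioSigma {S : Type*} (F : Set (S → ℝ)) : MeasurableSpace S :=
  ⨆ f ∈ F, ⨆ g ∈ F,
    MeasurableSpace.comap (fun x => ENNReal.ofReal (f x) / ENNReal.ofReal (g x))
      inferInstance

/-- Finite max-linear combinations `⋁ᵢ aᵢ fᵢ` with `aᵢ > 0`, `fᵢ ∈ F`. -/
def maxSpan {S : Type*} (F : Set (S → ℝ)) : Set (S → ℝ) :=
  {g | ∃ (n : ℕ) (a : Fin (n + 1) → ℝ) (f : Fin (n + 1) → S → ℝ),
    (∀ i, 0 < a i) ∧ (∀ i, f i ∈ F) ∧ g = fun x => ⨆ i, a i * f i x}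

namespace ENNReal

lemma div_iSup_of_ne_top {κ : Type*} [Nonempty κ] {a : ℝ≥0∞} (ha : a ≠ ∞) (β : κ → ℝ≥0∞) :
    a / (⨆ j, β j) = ⨅ j, a / β j := by
  simp only [div_eq_mul_inv, ENNReal.inv_iSup]
  exact ENNReal.mul_iInf' (fun h => absurd h ha) (fun _ => inferInstance)

lemma ofReal_ciSup {ι : Type*} [Nonempty ι] {u : ι → ℝ} (hu : BddAbove (Set.range u)) :
    ENNReal.ofReal (⨆ i, u i) = ⨆ i, ENNReal.ofReal (u i) :=
  Monotone.map_ciSup_of_continuousAt ENNReal.continuous_ofReal.continuousAt ENNReal.ofReal_mono hu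

lemma le_ofReal_iff_forall_nat_lt {a : ℝ≥0∞} {c : ℝ} (hc : 0 ≤ c) :
    a ≤ ENNReal.ofReal c ↔ ∀ n : ℕ, a < ENNReal.ofReal (c + 1 / (n + 1)) := by
  refine ⟨fun h n => h.trans_lt ?_, fun h => ?_⟩
  · rw [ENNReal.ofReal_lt_ofReal_iff (by positivity)]
    linarith [Nat.one_div_pos_of_nat (α := ℝ) (n := n)]
  · have hlim : Tendsto (fun n : ℕ => ENNReal.ofReal (c + 1 / (n + 1))) atTop
        (𝓝 (ENNReal.ofReal c)) := by
      simpa using ENNReal.tendsto_ofReal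
        ((tendsto_one_div_add_atTop_nhds_zero_nat (𝕜 := ℝ)).const_add c)
    exact ge_of_tendsto' hlim fun n => (h n).le

lemma iSup_div_iSup_le_ofReal_iff {ι κ : Type*} [Nonempty κ] {α : ι → ℝ≥0∞}
    (hα : ∀ i, α i ≠ ∞) (β : κ → ℝ≥0∞) {c : ℝ} (hc : 0 ≤ c) :
    (⨆ i, α i) / (⨆ j, β j) ≤ ENNReal.ofReal c ↔
      ∀ i, ∀ n : ℕ, ∃ j, α i / β j < ENNReal.ofReal (c + 1 / (n + 1)) := by
  rw [ENNReal.iSup_div, iSup_le_iff]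
  refine forall_congr' fun i => ?_
  simp only [div_iSup_of_ne_top (hα i), le_ofReal_iff_forall_nat_lt hc, iInf_lt_iff]

lemma ofReal_mul_div_ofReal_mul {a b : ℝ} (ha : 0 ≤ a) (hb : 0 < b) (u v : ℝ) :
    ENNReal.ofReal (a * u) / ENNReal.ofReal (b * v) =
      ENNReal.ofReal a / ENNReal.ofReal b * (ENNReal.ofReal u / ENNReal.ofReal v) := by
  rw [ENNReal.ofReal_mul ha, ENNReal.ofReal_mul hb.le,
    ENNReal.mul_div_mul_comm (Or.inl (ENNReal.ofReal_pos.2 hb).ne') (Or.inl ENNReal.ofReal_ne_top)]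

lemma ofReal_iSup_div_ofReal_iSup {ι κ : Type*} [Finite ι] [Nonempty ι] [Finite κ] [Nonempty κ]
    {a : ι → ℝ} {b : κ → ℝ} (ha : ∀ i, 0 ≤ a i) (hb : ∀ j, 0 < b j) (u : ι → ℝ) (v : κ → ℝ) :
    ENNReal.ofReal (⨆ i, a i * u i) / ENNReal.ofReal (⨆ j, b j * v j) =
      ⨆ i, ⨅ j, ENNReal.ofReal (a i) / ENNReal.ofReal (b j) *
        (ENNReal.ofReal (u i) / ENNReal.ofReal (v j)) := by
  simp only [ofReal_ciSup (Set.finite_range _).bddAbove, ENNReal.iSup_div,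
    div_iSup_of_ne_top ENNReal.ofReal_ne_top, ofReal_mul_div_ofReal_mul (ha _) (hb _)]

end ENNReal

lemma ratioSigma_le_iff {S : Type*} {F : Set (S → ℝ)} {m : MeasurableSpace S} :
    ratioSigma F ≤ m ↔ ∀ f ∈ F, ∀ g ∈ F,
      Measurable[m] fun x => ENNReal.ofReal (f x) / ENNReal.ofReal (g x) := by
  simp only [ratioSigma, iSup₂_le_iff, measurable_iff_comap_le]

lemma measurable_ratio_ratioSigma {S : Type*} {F : Set (S → ℝ)} {f g : S → ℝ}
    (hf : f ∈ F) (hg : g ∈ F) :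
    Measurable[ratioSigma F] fun x => ENNReal.ofReal (f x) / ENNReal.ofReal (g x) :=
  ratioSigma_le_iff.1 le_rfl f hf g hg

lemma ratioSigma_maxSpan_le {S : Type*} (F : Set (S → ℝ)) :
    ratioSigma (maxSpan F) ≤ ratioSigma F := by
  refine ratioSigma_le_iff.2 fun _ ⟨n, a, φ, ha, hφ, hf⟩ _ ⟨m, b, ψ, hb, hψ, hg⟩ => ?_
  subst hf hg
  simp only [ENNReal.ofReal_iSup_div_ofReal_iSup (fun i => (ha i).le) hb]
  exact Measurable.iSup fun i => Measurable.iInf fun j =>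
    (measurable_ratio_ratioSigma (hφ i) (hψ j)).const_mul _

theorem ratio_maxCombination_set_identity_general {S : Type*}
    (F : Set (S → ℝ)) :
    (∀ (f g : ℕ → S → ℝ), (∀ i, f i ∈ F) → (∀ j, g j ∈ F) →
      ∀ (a b : ℕ → ℝ), (∀ i, 0 ≤ a i) → (∀ j, 0 ≤ b j) → ∀ c : ℝ, 0 < c →
      {x : S | (⨆ i, ENNReal.ofReal (a i * f i x)) /
          (⨆ j, ENNReal.ofReal (b j * g j x)) ≤ ENNReal.ofReal c} =
        ⋂ i : ℕ, ⋂ n : ℕ, ⋃ j : ℕ,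
          {x : S | ENNReal.ofReal (a i * f i x) / ENNReal.ofReal (b j * g j x) <
            ENNReal.ofReal (c + 1 / (n + 1))}) ∧
    ratioSigma (maxSpan F) ≤ ratioSigma F := by
  refine ⟨fun f g _ _ a b _ _ c hc => ?_, ratioSigma_maxSpan_le F⟩
  ext x
  simp only [Set.mem_ofPred_eq, Set.mem_iInter, Set.mem_iUnion]
  exact ENNReal.iSup_div_iSup_le_ofReal_iff (fun _ => ENNReal.ofReal_ne_top) _ hc.le

/-- The level sets of ratios of countable max-linear combinations decompose as stated,
and consequently the ratio σ-field of the max-linear span of `F` is contained in the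
ratio σ-field of `F`. -/
theorem ratio_maxCombination_set_identity {S : Type*} [MeasurableSpace S] (μ : Measure S)
    (F : Set (S → ℝ)) (hFpos : ∀ f ∈ F, ∀ x, 0 ≤ f x) :
    (∀ (f g : ℕ → S → ℝ), (∀ i, f i ∈ F) → (∀ j, g j ∈ F) →
      ∀ (a b : ℕ → ℝ), (∀ i, 0 ≤ a i) → (∀ j, 0 ≤ b j) → ∀ c : ℝ, 0 < c →
      {x : S | (⨆ i, ENNReal.ofReal (a i * f i x)) /
          (⨆ j, ENNReal.ofReal (b j * g j x)) ≤ ENNReal.ofReal c} =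
        ⋂ i : ℕ, ⋂ n : ℕ, ⋃ j : ℕ,
          {x : S | ENNReal.ofReal (a i * f i x) / ENNReal.ofReal (b j * g j x) <
            ENNReal.ofReal (c + 1 / (n + 1))}) ∧
    ratioSigma (maxSpan F) ≤ ratioSigma F :=
  ratio_maxCombination_set_identity_general F
end

section
/- Let ℱ be a max-linear subspace of L^α_+(S,μ) where μ is σ-finite. Then there exists a function f₀ ∈ ℱ of full support in ℱ, i.e., μ(supp(g) \ supp(f₀)) = 0 for all g ∈ ℱ. -/
/-!
Replace `μ` by a finite measure `ν` with the same null sets. A maximizing sequence for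
`ν (supp f)`, `f ∈ ℱ`, can be merged into a single element of `ℱ`: rescale its terms so that
their `α`-th powers have summable integrals; the running maxima then lie in `ℱ` and increase
to a limit in `L^α`, which lies in `ℱ` by closedness. Its support has maximal `ν`-measure,
and comparing it with its maximum with any `g ∈ ℱ` shows it contains `supp g` up to a null set.
-/

open MeasureTheory Filter Topology

theorem exists_mem_forall_measure_diff_eq_zero {S : Type*} [MeasurableSpace S]
    (μ : Measure S) [SFinite μ] (𝒮 : Set (Set S)) (hne : 𝒮.Nonempty)
    (hmeas : ∀ s ∈ 𝒮, MeasurableSet s)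
    (hbound : ∀ s : ℕ → Set S, (∀ n, s n ∈ 𝒮) → ∃ t ∈ 𝒮, ∀ n, μ (s n \ t) = 0) :
    ∃ t ∈ 𝒮, ∀ s ∈ 𝒮, μ (s \ t) = 0 := by
  obtain ⟨ν, hν, hμν, hνμ⟩ := exists_isFiniteMeasure_absolutelyContinuous μ
  have hbound_ν (s : ℕ → Set S) (hs : ∀ n, s n ∈ 𝒮) : ∃ t ∈ 𝒮, ∀ n, s n ≤ᵐ[ν] t := by
    obtain ⟨t, ht, hst⟩ := hbound s hs
    exact ⟨t, ht, fun n => ae_le_set.2 (hνμ (hst n))⟩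
  obtain ⟨u, -, hu_lim, hu_mem⟩ := exists_seq_tendsto_sSup (hne.image ν) (OrderTop.bddAbove _)
  choose s hs hsu using hu_mem
  obtain ⟨t, ht, hst⟩ := hbound_ν s hs
  have ht_max (s' : Set S) (hs' : s' ∈ 𝒮) : ν s' ≤ ν t :=
    (le_csSup (OrderTop.bddAbove _) (Set.mem_image_of_mem ν hs')).trans <|
      le_of_tendsto' hu_lim fun n => hsu n ▸ measure_mono_ae (hst n)
  refine ⟨t, ht, fun s' hs' => hμν ?_⟩
  -- a common a.e. upper bound `t'` of `s'` and `t` cannot be larger than `t`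
  obtain ⟨t', ht', hst'⟩ := hbound_ν (fun n => if n = 0 then t else s')
    (fun n => by split <;> assumption)
  have hunion : ν (s' \ t) + ν t ≤ 0 + ν t := calc
    ν (s' \ t) + ν t = ν (s' ∪ t) := by
      rw [← measure_union Set.disjoint_sdiff_left (hmeas t ht), Set.sdiff_union_self]
    _ ≤ ν (t' ∪ t') := measure_mono_ae <| (hst' 1).union (hst' 0)
    _ ≤ 0 + ν t := by rw [Set.union_self, zero_add]; exact ht_max t' ht'
  exact nonpos_iff_eq_zero.1 <| (ENNReal.add_le_add_iff_right (measure_ne_top ν t)).1 hunion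

theorem tendsto_lintegral_ofReal_abs_toReal_sub_iSup {S : Type*} [MeasurableSpace S]
    {μ : Measure S} {Φ : ℕ → S → ENNReal} (hΦ : ∀ n, Measurable (Φ n)) (hmono : Monotone Φ)
    (hfin : ∫⁻ x, ⨆ n, Φ n x ∂μ ≠ ⊤) :
    Tendsto (fun n => ∫⁻ x, ENNReal.ofReal |(Φ n x).toReal - (⨆ k, Φ k x).toReal| ∂μ)
      atTop (𝓝 0) := by
  have hsup_lt_top : ∀ᵐ x ∂μ, ⨆ k, Φ k x < ⊤ := ae_lt_top (Measurable.iSup hΦ) hfin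
  have hΦ_le (n : ℕ) (x : S) : Φ n x ≤ ⨆ k, Φ k x := le_iSup (Φ · x) n
  simpa using tendsto_lintegral_of_dominated_convergence (f := 0) (fun x => ⨆ k, Φ k x)
    (fun n => ((hΦ n).ennreal_toReal.sub (Measurable.iSup hΦ).ennreal_toReal).abs.ennreal_ofReal)
    (fun n => hsup_lt_top.mono fun x hx => by
      refine (ENNReal.ofReal_le_ofReal ?_).trans ENNReal.ofReal_toReal_le
      exact abs_sub_le_of_nonneg_of_le ENNReal.toReal_nonneg
        (ENNReal.toReal_mono hx.ne (hΦ_le n x)) ENNReal.toReal_nonneg le_rfl)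
    hfin
    (hsup_lt_top.mono fun x hx => by
      have hlim := (ENNReal.tendsto_toReal hx.ne).comp
        (tendsto_atTop_iSup fun m n hmn => hmono hmn x)
      simpa using ENNReal.tendsto_ofReal ((hlim.sub_const (⨆ k, Φ k x).toReal).abs))

theorem exists_pos_lintegral_ofReal_mul_rpow_le {S : Type*} [MeasurableSpace S]
    {μ : Measure S} {α : ℝ} (hα : 0 < α) {f : S → ℝ} (hf : Measurable f)
    (hf_nonneg : ∀ x, 0 ≤ f x)
    (hf_int : ∫⁻ x, ENNReal.ofReal (f x ^ α) ∂μ ≠ ⊤) {ε : ENNReal} (hε : ε ≠ 0) :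
    ∃ c : ℝ, 0 < c ∧ ∫⁻ x, ENNReal.ofReal ((c * f x) ^ α) ∂μ ≤ ε := by
  have hscale (c : ℝ) (hc : 0 ≤ c) : ∫⁻ x, ENNReal.ofReal ((c * f x) ^ α) ∂μ
      = ENNReal.ofReal (c ^ α) * ∫⁻ x, ENNReal.ofReal (f x ^ α) ∂μ := by
    simp_rw [Real.mul_rpow hc (hf_nonneg _), ENNReal.ofReal_mul (Real.rpow_nonneg hc α)]
    exact lintegral_const_mul _ (hf.pow_const α).ennreal_ofReal
  have hlim : Tendsto (fun c : ℝ => ENNReal.ofReal (c ^ α) * ∫⁻ x, ENNReal.ofReal (f x ^ α) ∂μ)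
      (𝓝[>] 0) (𝓝 0) := by
    have h := ENNReal.Tendsto.mul_const (ENNReal.tendsto_ofReal
      ((Real.continuousAt_rpow_const 0 α (Or.inr hα.le)).tendsto)) (Or.inr hf_int)
    simpa [Real.zero_rpow hα.ne'] using h.mono_left nhdsWithin_le_nhds
  obtain ⟨c, hcε, hc⟩ := ((hlim.eventually (gt_mem_nhds (pos_iff_ne_zero.2 hε))).and
    self_mem_nhdsWithin).exists
  exact ⟨c, hc, (hscale c (le_of_lt hc)).trans_le hcε.le⟩

theorem exists_mem_ae_le_of_monotone {S : Type*} [MeasurableSpace S] {μ : Measure S}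
    {α : ℝ} (hα : 0 < α) {ℱ : Set (S → ℝ)}
    (hclosed : ∀ g : S → ℝ, Measurable g → (∀ x, 0 ≤ g x) →
      (∃ h : ℕ → S → ℝ, (∀ n, h n ∈ ℱ) ∧
        Tendsto (fun n => ∫⁻ x, ENNReal.ofReal |h n x ^ α - g x ^ α| ∂μ) atTop (𝓝 0)) →
      g ∈ ℱ)
    {h : ℕ → S → ℝ} (hℱ : ∀ n, h n ∈ ℱ) (hmeas : ∀ n, Measurable (h n))
    (hnonneg : ∀ n x, 0 ≤ h n x) (hmono : Monotone h) {C : ENNReal} (hC : C ≠ ⊤)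
    (hbdd : ∀ n, ∫⁻ x, ENNReal.ofReal (h n x ^ α) ∂μ ≤ C) :
    ∃ g ∈ ℱ, ∀ n, h n ≤ᵐ[μ] g := by
  set Φ : ℕ → S → ENNReal := fun n x => ENNReal.ofReal (h n x ^ α)
  have hΦ_meas (n : ℕ) : Measurable (Φ n) := ((hmeas n).pow_const α).ennreal_ofReal
  have hΦ_mono : Monotone Φ := fun m n hmn x =>
    ENNReal.ofReal_le_ofReal (Real.rpow_le_rpow (hnonneg m x) (hmono hmn x) hα.le)
  have hfin : ∫⁻ x, ⨆ n, Φ n x ∂μ ≠ ⊤ := by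
    rw [lintegral_iSup hΦ_meas hΦ_mono]
    exact ne_top_of_le_ne_top hC (iSup_le hbdd)
  set g : S → ℝ := fun x => (⨆ n, Φ n x).toReal ^ α⁻¹
  have hg_rpow (x : S) : g x ^ α = (⨆ n, Φ n x).toReal :=
    Real.rpow_inv_rpow ENNReal.toReal_nonneg hα.ne'
  have hh_rpow (n : ℕ) (x : S) : h n x ^ α = (Φ n x).toReal :=
    (ENNReal.toReal_ofReal (Real.rpow_nonneg (hnonneg n x) α)).symm
  have hg_nonneg (x : S) : 0 ≤ g x := Real.rpow_nonneg ENNReal.toReal_nonneg _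
  have hgℱ : g ∈ ℱ := by
    refine hclosed g ((Measurable.iSup hΦ_meas).ennreal_toReal.pow_const _) hg_nonneg ⟨h, hℱ, ?_⟩
    simpa only [hg_rpow, hh_rpow] using
      tendsto_lintegral_ofReal_abs_toReal_sub_iSup hΦ_meas hΦ_mono hfin
  refine ⟨g, hgℱ, fun n => ?_⟩
  filter_upwards [ae_lt_top (Measurable.iSup hΦ_meas) hfin] with x hx
  rw [← Real.rpow_le_rpow_iff (hnonneg n x) (hg_nonneg x) hα, hg_rpow, hh_rpow]
  exact ENNReal.toReal_mono hx.ne (le_iSup (Φ · x) n)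

theorem exists_mem_support_ae_subset {S : Type*} [MeasurableSpace S] {μ : Measure S}
    {α : ℝ} (hα : 0 < α) {ℱ : Set (S → ℝ)}
    (hmem : ∀ f ∈ ℱ, Measurable f ∧ (∀ x, 0 ≤ f x) ∧
      ∫⁻ x, ENNReal.ofReal (f x ^ α) ∂μ < ⊤)
    (hmax : ∀ a b : ℝ, 0 < a → 0 < b → ∀ f ∈ ℱ, ∀ g ∈ ℱ,
      (fun x => max (a * f x) (b * g x)) ∈ ℱ)
    (hclosed : ∀ g : S → ℝ, Measurable g → (∀ x, 0 ≤ g x) →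
      (∃ h : ℕ → S → ℝ, (∀ n, h n ∈ ℱ) ∧
        Tendsto (fun n => ∫⁻ x, ENNReal.ofReal |h n x ^ α - g x ^ α| ∂μ) atTop (𝓝 0)) →
      g ∈ ℱ)
    {f : ℕ → S → ℝ} (hf : ∀ n, f n ∈ ℱ) :
    ∃ g ∈ ℱ, ∀ n, μ (Function.support (f n) \ Function.support g) = 0 := by
  have hsmul_mem (c : ℝ) (hc : 0 < c) (u : S → ℝ) (hu : u ∈ ℱ) : (fun x => c * u x) ∈ ℱ := by
    simpa only [max_self] using hmax c c hc hc u hu u hu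
  have hsup_mem (u : S → ℝ) (hu : u ∈ ℱ) (v : S → ℝ) (hv : v ∈ ℱ) : u ⊔ v ∈ ℱ := by
    convert hmax 1 1 one_pos one_pos u hu v hv using 1
    simp only [one_mul]; rfl
  -- rescale the `f n` so that their `α`-th powers have summable integrals
  obtain ⟨ε, hε_pos, hε_sum⟩ := ENNReal.exists_pos_sum_of_countable one_ne_zero ℕ
  choose c hc_pos hc_int using fun n => exists_pos_lintegral_ofReal_mul_rpow_le hα
    (hmem _ (hf n)).1 (hmem _ (hf n)).2.1 (hmem _ (hf n)).2.2.ne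
    (ENNReal.coe_ne_zero.2 (hε_pos n).ne')
  set F : ℕ → S → ℝ := fun n x => c n * f n x
  have hFℱ (n : ℕ) : F n ∈ ℱ := hsmul_mem _ (hc_pos n) _ (hf n)
  set h := partialSups F
  have hhℱ (n : ℕ) : h n ∈ ℱ := by
    rw [partialSups_apply]
    exact Finset.sup'_induction _ _ hsup_mem fun k _ => hFℱ k
  have hh_le_tsum (n : ℕ) (x : S) :
      ENNReal.ofReal (h n x ^ α) ≤ ∑' k, ENNReal.ofReal (F k x ^ α) := by
    obtain ⟨k, -, hk⟩ := exists_partialSups_eq (F · x) n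
    rw [Pi.partialSups_apply, hk]
    exact ENNReal.le_tsum k
  have hbdd (n : ℕ) : ∫⁻ x, ENNReal.ofReal (h n x ^ α) ∂μ ≤ 1 := calc
    _ ≤ ∫⁻ x, ∑' k, ENNReal.ofReal (F k x ^ α) ∂μ := lintegral_mono (hh_le_tsum n)
    _ = ∑' k, ∫⁻ x, ENNReal.ofReal (F k x ^ α) ∂μ := lintegral_tsum fun k =>
      (((hmem _ (hFℱ k)).1).pow_const α).ennreal_ofReal.aemeasurable
    _ ≤ ∑' k, (ε k : ENNReal) := ENNReal.tsum_le_tsum hc_int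
    _ ≤ 1 := hε_sum.le
  obtain ⟨g, hgℱ, hhg⟩ := exists_mem_ae_le_of_monotone hα hclosed hhℱ
    (fun n => (hmem _ (hhℱ n)).1) (fun n => (hmem _ (hhℱ n)).2.1) h.monotone
    ENNReal.one_ne_top hbdd
  refine ⟨g, hgℱ, fun n => ae_le_set.1 ?_⟩
  filter_upwards [hhg n] with x hx hfx
  have hFx : 0 < F n x := mul_pos (hc_pos n) ((hmem _ (hf n)).2.1 x |>.lt_of_ne' hfx)
  exact (hFx.trans_le ((le_partialSups F n x).trans hx)).ne'

/-- Any nonempty max-linear subspace `ℱ` of `L^α_+(S,μ)` with `μ` σ-finite contains a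
function `f₀` of full support in `ℱ`: `μ(supp g \ supp f₀) = 0` for all `g ∈ ℱ`. -/
theorem exists_full_support_of_sigmaFinite {S : Type*} [MeasurableSpace S]
    (μ : Measure S) [SigmaFinite μ] (α : ℝ) (hα : 0 < α)
    (ℱ : Set (S → ℝ)) (hne : ℱ.Nonempty)
    (hmem : ∀ f ∈ ℱ, Measurable f ∧ (∀ x, 0 ≤ f x) ∧
      ∫⁻ x, ENNReal.ofReal (f x ^ α) ∂μ < ⊤)
    (hmax : ∀ a b : ℝ, 0 < a → 0 < b → ∀ f ∈ ℱ, ∀ g ∈ ℱ,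
      (fun x => max (a * f x) (b * g x)) ∈ ℱ)
    (hclosed : ∀ g : S → ℝ, Measurable g → (∀ x, 0 ≤ g x) →
      (∃ h : ℕ → S → ℝ, (∀ n, h n ∈ ℱ) ∧
        Tendsto (fun n => ∫⁻ x, ENNReal.ofReal |h n x ^ α - g x ^ α| ∂μ) atTop (nhds 0)) →
      g ∈ ℱ) :
    ∃ f₀ ∈ ℱ, ∀ g ∈ ℱ, μ ({x | g x ≠ 0} \ {x | f₀ x ≠ 0}) = 0 := by
  have hsupp_meas : ∀ s ∈ Function.support '' ℱ, MeasurableSet s := by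
    rintro _ ⟨f, hf, rfl⟩
    exact (measurableSet_singleton 0).compl.preimage (hmem f hf).1
  have hsupp_bound (s : ℕ → Set S) (hs : ∀ n, s n ∈ Function.support '' ℱ) :
      ∃ t ∈ Function.support '' ℱ, ∀ n, μ (s n \ t) = 0 := by
    choose f hfℱ hfs using hs
    obtain ⟨g, hgℱ, hfg⟩ := exists_mem_support_ae_subset hα hmem hmax hclosed hfℱ
    exact ⟨_, ⟨g, hgℱ, rfl⟩, fun n => hfs n ▸ hfg n⟩
  obtain ⟨_, ⟨f₀, hf₀, rfl⟩, hf₀_max⟩ :=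
    exists_mem_forall_measure_diff_eq_zero μ _ (hne.image _) hsupp_meas hsupp_bound
  exact ⟨f₀, hf₀, fun g hg => hf₀_max _ ⟨g, hg, rfl⟩⟩
end

section
/- Let F ⊆ L^α_+(S,μ) and suppose f₀ ∈ F has full support with supp(f₀) = S (mod μ). If the ratio σ-field ρ(F) is equivalent mod μ to the Borel σ-field ℬ_S, then the extended positive ratio space ℛ_{e,+}(F) = { r·f : r ≥ 0 ρ(F)-measurable, f ∈ F } ∩ L^α_+(S,μ) equals all of L^α_+(S,μ). -/
/-
Since `f₀ > 0` a.e., `g = (g / f₀) · f₀` a.e., so it suffices to replace the measurable ratio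
`g / f₀` by a `ρ(F)`-measurable function equal to it a.e. Each sublevel set `{g / f₀ < q}`,
`q ∈ ℚ`, agrees a.e. with a `ρ(F)`-measurable set `C q`, and
`x ↦ inf {q | x ∈ C q}` does it.
-/

open MeasureTheory

open scoped ENNReal

theorem ENNReal.iInf_rat_lt_ofReal (a : ℝ≥0∞) :
    ⨅ (q : ℚ) (_ : a < ENNReal.ofReal q), ENNReal.ofReal q = a := by
  refine le_antisymm (le_of_forall_gt fun b hab => ?_) (le_iInf₂ fun q hq => hq.le)
  obtain ⟨q, -, haq, hqb⟩ := ENNReal.lt_iff_exists_rat_btwn.1 hab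
  exact (iInf₂_le q haq).trans_lt hqb

theorem Measurable.aestronglyMeasurable_of_forall_measure_symmDiff_eq_zero {S : Type*}
    {m m₀ : MeasurableSpace S} {μ : Measure[m₀] S}
    (h : ∀ B, MeasurableSet[m₀] B → ∃ A, MeasurableSet[m] A ∧ μ (symmDiff A B) = 0)
    {f : S → ℝ≥0∞} (hf : Measurable[m₀] f) : AEStronglyMeasurable[m] f μ := by
  classical
  choose C hCm hC using fun q : ℚ => h {x | f x < ENNReal.ofReal q} (hf measurableSet_Iio)
  refine ⟨fun x => ⨅ q : ℚ, (C q).piecewise (fun _ => ENNReal.ofReal q) (fun _ => ⊤) x,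
    (Measurable.iInf fun q => measurable_const.piecewise (hCm q) measurable_const)
      |>.stronglyMeasurable, ?_⟩
  have hCf : ∀ᵐ x ∂μ, ∀ q, x ∈ C q ↔ f x < ENNReal.ofReal q :=
    ae_all_iff.2 fun q => (measure_symmDiff_eq_zero_iff.1 (hC q)).mono fun _ => Iff.of_eq
  filter_upwards [hCf] with x hx
  simp only [Set.piecewise, hx, ← iInf_eq_if]
  exact (ENNReal.iInf_rat_lt_ofReal (f x)).symm

theorem extended_ratio_space_eq_Lalpha_general {S : Type*} [MeasurableSpace S] (μ : Measure S)
    (α : ℝ) (F : Set (S → ℝ))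
    (hmem : ∀ f ∈ F, Measurable f ∧ (∀ x, 0 ≤ f x) ∧
      ∫⁻ x, ENNReal.ofReal (f x ^ α) ∂μ < ⊤)
    (f₀ : S → ℝ) (hf₀ : f₀ ∈ F)
    (hsupp : μ {x | f₀ x = 0} = 0)
    (hequiv₂ : ∀ B : Set S, MeasurableSet B →
      ∃ A : Set S, MeasurableSet[ratioSigma F] A ∧ μ (symmDiff A B) = 0) :
    ∀ g : S → ℝ, Measurable g → (∀ x, 0 ≤ g x) →
      (∫⁻ x, ENNReal.ofReal (g x ^ α) ∂μ < ⊤) →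
      ∃ r : S → ℝ, @Measurable S ℝ (ratioSigma F) _ r ∧ (∀ x, 0 ≤ r x) ∧
        ∃ f ∈ F, g =ᵐ[μ] fun x => r x * f x := by
  intro g hg hg0 _
  obtain ⟨hf₀m, hf₀0, -⟩ := hmem f₀ hf₀
  have hratio : Measurable fun x => ENNReal.ofReal (g x / f₀ x) :=
    ENNReal.measurable_ofReal.comp (hg.div hf₀m)
  obtain ⟨r, hrm, hr⟩ :=
    hratio.aestronglyMeasurable_of_forall_measure_symmDiff_eq_zero hequiv₂
  refine ⟨fun x => (r x).toReal, ENNReal.measurable_toReal.comp hrm.measurable,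
    fun x => ENNReal.toReal_nonneg, f₀, hf₀, ?_⟩
  have hf₀_ne : ∀ᵐ x ∂μ, f₀ x ≠ 0 := ae_iff.2 (by simpa using hsupp)
  filter_upwards [hr, hf₀_ne] with x hrx hx
  rw [← hrx, ENNReal.toReal_ofReal (div_nonneg (hg0 x) (hf₀0 x)), div_mul_cancel₀ _ hx]

/-- If `f₀ ∈ F` has full support with `supp f₀ = S` (mod `μ`) and `ρ(F) ∼ ℬ_S mod μ`,
then the extended positive ratio space `ℛ_{e,+}(F)` is all of `L^α_+(S,μ)`: every
`g ∈ L^α_+(S,μ)` is (a.e.) of the form `r·f` with `r ≥ 0` `ρ(F)`-measurable, `f ∈ F`. -/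
theorem extended_ratio_space_eq_Lalpha {S : Type*} [MeasurableSpace S] (μ : Measure S)
    (α : ℝ) (hα : 0 < α) (F : Set (S → ℝ))
    (hmem : ∀ f ∈ F, Measurable f ∧ (∀ x, 0 ≤ f x) ∧
      ∫⁻ x, ENNReal.ofReal (f x ^ α) ∂μ < ⊤)
    (f₀ : S → ℝ) (hf₀ : f₀ ∈ F)
    (hfull : ∀ g ∈ F, μ ({x | g x ≠ 0} \ {x | f₀ x ≠ 0}) = 0)
    (hsupp : μ {x | f₀ x = 0} = 0)
    (hequiv₁ : ∀ A : Set S, MeasurableSet[ratioSigma F] A →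
      ∃ B : Set S, MeasurableSet B ∧ μ (symmDiff A B) = 0)
    (hequiv₂ : ∀ B : Set S, MeasurableSet B →
      ∃ A : Set S, MeasurableSet[ratioSigma F] A ∧ μ (symmDiff A B) = 0) :
    ∀ g : S → ℝ, Measurable g → (∀ x, 0 ≤ g x) →
      (∫⁻ x, ENNReal.ofReal (g x ^ α) ∂μ < ⊤) →
      ∃ r : S → ℝ, @Measurable S ℝ (ratioSigma F) _ r ∧ (∀ x, 0 ≤ r x) ∧
        ∃ f ∈ F, g =ᵐ[μ] fun x => r x * f x :=
  extended_ratio_space_eq_Lalpha_general μ α F hmem f₀ hf₀ hsupp hequiv₂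
end
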